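/- Fix p, q ∈ ℝ and set P = (p,q). The point P belongs to the orbit {P'(r) : r ∈ ℝ} if and only if 4p + q² ≥ 0. Consequently, Beloch's curve 𝓕 equals the orbit {P'(r) : r ∈ ℝ} when 4p + q² ≥ 0, and 𝓕 is the disjoint union of the orbit and the isolated set {P} when 4p + q² < 0. -/

import Mathlib

/-!
`P'(r) - P` is a multiple of the normal `(1, r)` of `ℓ_r`, so `r` is the slope of the line
through `P` and `P'(r)`. Hence a point `(x, y)` with `x ≠ p` can only be `P'((q - y)/(p - x))`,
and clearing denominators in that identity gives exactly `F(x, y) = 0`; on the vertical line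
`x = p` the curve meets only `P`. Finally `P'(r) = P` iff `P ∈ ℓ_r`, i.e. iff
`r² - q r - p = 0`, which has a real root iff its discriminant `q² + 4p` is nonnegative.
-/

/-- The reflection of a point `Q = (u,v)` across the line
`ℓ_r = {(x,y) : x + r*y - r^2 = 0}`. -/
noncomputable def reflLine (r : ℝ) (Q : ℝ × ℝ) : ℝ × ℝ :=
  (Q.1 - 2 * (Q.1 + r * Q.2 - r ^ 2) / (1 + r ^ 2) * 1,
   Q.2 - 2 * (Q.1 + r * Q.2 - r ^ 2) / (1 + r ^ 2) * r)

/-- Beloch's polynomial `F(x,y)` associated with `P = (p,q)`. -/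
def belochF (p q x y : ℝ) : ℝ :=
  2 * (q - y) ^ 2 - (q + y) * (q - y) * (p - x) - (p - x) ^ 2 * (p + x)

lemma reflLine_eq_self_iff (r : ℝ) (Q : ℝ × ℝ) :
    reflLine r Q = Q ↔ Q.1 + r * Q.2 - r ^ 2 = 0 := by
  have hden : (1 + r ^ 2 : ℝ) ≠ 0 := by positivity
  constructor
  · intro h
    have h1 := congrArg Prod.fst h
    simp only [reflLine, mul_one, sub_eq_self, div_eq_zero_iff, hden, or_false] at h1
    simpa using h1
  · intro h
    simp [reflLine, h]

lemma exists_root_iff_discrim_nonneg (p q : ℝ) :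
    (∃ r : ℝ, p + r * q - r ^ 2 = 0) ↔ 0 ≤ 4 * p + q ^ 2 := by
  constructor
  · rintro ⟨r, hr⟩
    nlinarith [sq_nonneg (2 * r - q)]
  · intro h
    refine ⟨(q + √(4 * p + q ^ 2)) / 2, ?_⟩
    nlinarith [Real.sq_sqrt h]

lemma mem_range_reflLine_self_iff (p q : ℝ) :
    (p, q) ∈ Set.range (fun r : ℝ => reflLine r (p, q)) ↔ 0 ≤ 4 * p + q ^ 2 := by
  simp only [Set.mem_range, reflLine_eq_self_iff, exists_root_iff_discrim_nonneg]

lemma belochF_reflLine (p q r : ℝ) :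
    belochF p q (reflLine r (p, q)).1 (reflLine r (p, q)).2 = 0 := by
  have hden : (1 + r ^ 2 : ℝ) ≠ 0 := by positivity
  simp only [reflLine, belochF]
  field_simp
  ring

lemma reflLine_slope_eq {p q x y : ℝ} (hx : x ≠ p) (hF : belochF p q x y = 0) :
    reflLine ((q - y) / (p - x)) (p, q) = (x, y) := by
  have hpx : p - x ≠ 0 := sub_ne_zero.mpr hx.symm
  have hden : (1 + ((q - y) / (p - x)) ^ 2 : ℝ) ≠ 0 := by positivity
  simp only [belochF] at hF
  simp only [reflLine, Prod.mk.injEq]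
  constructor
  · field_simp
    linear_combination hF
  · field_simp
    linear_combination (q - y) * hF

lemma belochF_fst_eq_iff (p q y : ℝ) : belochF p q p y = 0 ↔ y = q := by
  simp only [belochF, sub_self]
  constructor
  · intro h
    nlinarith [sq_nonneg (q - y)]
  · rintro rfl
    ring

lemma setOf_belochF_eq (p q : ℝ) :
    {X : ℝ × ℝ | belochF p q X.1 X.2 = 0} =
      Set.range (fun r : ℝ => reflLine r (p, q)) ∪ {(p, q)} := by
  ext ⟨x, y⟩
  simp only [Set.mem_ofPred_eq, Set.mem_union, Set.mem_singleton_iff, Prod.mk.injEq]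
  constructor
  · intro hF
    by_cases hx : x = p
    · subst hx
      exact Or.inr ⟨rfl, (belochF_fst_eq_iff x q y).mp hF⟩
    · exact Or.inl ⟨_, reflLine_slope_eq hx hF⟩
  · rintro (⟨r, hr⟩ | ⟨rfl, rfl⟩)
    · simpa [hr] using belochF_reflLine p q r
    · exact (belochF_fst_eq_iff x y y).mpr rfl

/-- `P = (p,q)` belongs to the orbit `{P'(r) : r ∈ ℝ}` iff `4p + q² ≥ 0`;
consequently Beloch's curve `𝓕` equals the orbit when `4p + q² ≥ 0`, and is
the disjoint union of the orbit and `{P}` when `4p + q² < 0`. -/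
theorem stmt_6 (p q : ℝ) :
    ((p, q) ∈ Set.range (fun r : ℝ => reflLine r (p, q)) ↔ 4 * p + q ^ 2 ≥ 0) ∧
    (4 * p + q ^ 2 ≥ 0 →
      {X : ℝ × ℝ | belochF p q X.1 X.2 = 0} =
        Set.range (fun r : ℝ => reflLine r (p, q))) ∧
    (4 * p + q ^ 2 < 0 →
      {X : ℝ × ℝ | belochF p q X.1 X.2 = 0} =
        Set.range (fun r : ℝ => reflLine r (p, q)) ∪ {(p, q)} ∧
      (p, q) ∉ Set.range (fun r : ℝ => reflLine r (p, q))) := by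
  refine ⟨mem_range_reflLine_self_iff p q, fun h => ?_, fun h => ?_⟩
  · rw [setOf_belochF_eq, Set.union_singleton,
      Set.insert_eq_of_mem ((mem_range_reflLine_self_iff p q).mpr h)]
  · exact ⟨setOf_belochF_eq p q, fun hP => (mem_range_reflLine_self_iff p q).mp hP |>.not_gt h⟩
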